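/- arXiv:alg-geom/9608010 — 2 statements merged into one kernel-verified Lean document; each statement's English description precedes it below -/
import Mathlib

section
/- Let f₁,…,f_n, f_{n+1} ∈ ℤ[X₁,…,Xₙ] be polynomials having no common zero in ℂⁿ, where f₁,…,fₙ form a regular sequence in ℚ[X₁,…,Xₙ] whose common zero set in ℂⁿ is finite. Then there exist a nonzero integer a and a polynomial g_{n+1} ∈ ℤ[X₁,…,Xₙ] such that a − g_{n+1}·f_{n+1} belongs to the ideal generated by f₁,…,fₙ in ℤ[X₁,…,Xₙ]. -/
/-!
Since `f₁, …, fₙ, f_{n+1}` have no common complex zero, the weak Nullstellensatz (Zariski's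
lemma, then an embedding of the residue field into `ℂ`) shows that they generate the unit ideal
of `ℚ[X₁,…,Xₙ]`. As `ℚ[X₁,…,Xₙ]` is the localization of `ℤ[X₁,…,Xₙ]` at the nonzero integer
constants, the ideal they generate in `ℤ[X₁,…,Xₙ]` contains a nonzero constant `a`.
-/

open MvPolynomial

namespace MvPolynomial

theorem exists_forall_mem_aeval_eq_zero {K L σ : Type*} [Field K] [Field L] [IsAlgClosed L]
    [Algebra K L] [Finite σ] {I : Ideal (MvPolynomial σ K)} (hI : I ≠ ⊤) :
    ∃ x : σ → L, ∀ p ∈ I, aeval x p = 0 := by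
  obtain ⟨m, hm, hIm⟩ := Ideal.exists_le_maximal I hI
  let := Ideal.Quotient.field m
  have : Module.Finite K (MvPolynomial σ K ⧸ m) :=
    finite_of_finite_type_of_isJacobsonRing K _
  let φ : MvPolynomial σ K →ₐ[K] L := (IsAlgClosed.lift (R := K)).comp (Ideal.Quotient.mkₐ K m)
  refine ⟨fun i => φ (X i), fun p hp => ?_⟩
  have hφ : aeval (fun i => φ (X i)) p = φ p := (DFunLike.congr_fun (aeval_unique φ) p).symm
  rw [hφ]
  change IsAlgClosed.lift (Ideal.Quotient.mk m p) = 0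
  rw [Ideal.Quotient.eq_zero_iff_mem.mpr (hIm hp), map_zero]

attribute [local instance] algebraMvPolynomial in
theorem exists_C_mem_of_map_eq_top {R S σ : Type*} [CommRing R] [CommRing S] [Algebra R S]
    (M : Submonoid R) [IsLocalization M S] {I : Ideal (MvPolynomial σ R)}
    (hI : I.map (map (algebraMap R S)) = ⊤) : ∃ r ∈ M, C r ∈ I := by
  have hM := mt (IsLocalization.map_algebraMap_ne_top_iff_disjoint (M.map C)
    (MvPolynomial σ S) I).mpr (not_not.mpr hI)
  obtain ⟨_, ⟨r, hr, rfl⟩, hrI⟩ := Set.not_disjoint_iff.mp hM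
  exact ⟨r, hr, hrI⟩

end MvPolynomial

theorem statement_1_general (n : ℕ) (f : Fin n → MvPolynomial (Fin n) ℤ)
    (fn1 : MvPolynomial (Fin n) ℤ)
    -- `f₁, …, fₙ, f_{n+1}` have no common zero in `ℂⁿ`:
    (hnozero : ¬ ∃ x : Fin n → ℂ,
        (∀ i, MvPolynomial.aeval x (f i) = 0) ∧ MvPolynomial.aeval x fn1 = 0) :
    ∃ (a : ℤ) (g : MvPolynomial (Fin n) ℤ), a ≠ 0 ∧
      MvPolynomial.C a - g * fn1 ∈ Ideal.span (Set.range f) := by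
  set I := Ideal.span (Set.range f) ⊔ Ideal.span {fn1}
  have hI : I.map (map (algebraMap ℤ ℚ)) = ⊤ := by
    by_contra hne
    obtain ⟨x, hx⟩ := exists_forall_mem_aeval_eq_zero (L := ℂ) hne
    have hzero : ∀ p ∈ I, aeval x p = 0 := fun p hp => by
      rw [← aeval_map_algebraMap ℚ]
      exact hx _ (Ideal.mem_map_of_mem _ hp)
    exact hnozero ⟨x, fun i => hzero _ (Ideal.mem_sup_left (Ideal.subset_span ⟨i, rfl⟩)),
      hzero _ (Ideal.mem_sup_right (Ideal.mem_span_singleton_self fn1))⟩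
  obtain ⟨a, ha, haI⟩ := exists_C_mem_of_map_eq_top (nonZeroDivisors ℤ) hI
  obtain ⟨p, hp, q, hq, hpq⟩ := Submodule.mem_sup.mp haI
  obtain ⟨g, rfl⟩ := Ideal.mem_span_singleton'.mp hq
  exact ⟨a, g, nonZeroDivisors.ne_zero ha, by rwa [← hpq, add_sub_cancel_right]⟩

/-- A division step in the effective Nullstellensatz.
Let `f₁, …, fₙ, f_{n+1} ∈ ℤ[X₁,…,Xₙ]` have no common zero in `ℂⁿ`, where
`f₁, …, fₙ` form a regular sequence in `ℚ[X₁,…,Xₙ]` whose common zero set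
in `ℂⁿ` is finite.  Then there exist a nonzero integer `a` and a polynomial
`g_{n+1} ∈ ℤ[X₁,…,Xₙ]` such that `a − g_{n+1}·f_{n+1}` belongs to the ideal
generated by `f₁, …, fₙ` in `ℤ[X₁,…,Xₙ]`. -/
theorem statement_1 (n : ℕ) (f : Fin n → MvPolynomial (Fin n) ℤ)
    (fn1 : MvPolynomial (Fin n) ℤ)
    -- `f₁, …, fₙ` is a regular sequence in `ℚ[X₁,…,Xₙ]`:
    (hreg : ∀ i : Fin n, ∀ g : MvPolynomial (Fin n) ℚ,
      g * MvPolynomial.map (Int.castRingHom ℚ) (f i) ∈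
        Ideal.span ((fun j : Fin n => MvPolynomial.map (Int.castRingHom ℚ) (f j)) ''
          {j | j < i}) →
      g ∈ Ideal.span ((fun j : Fin n => MvPolynomial.map (Int.castRingHom ℚ) (f j)) ''
          {j | j < i}))
    -- the common zero set of `f₁, …, fₙ` in `ℂⁿ` is finite:
    (hfin : {x : Fin n → ℂ | ∀ i, MvPolynomial.aeval x (f i) = 0}.Finite)
    -- `f₁, …, fₙ, f_{n+1}` have no common zero in `ℂⁿ`:
    (hnozero : ¬ ∃ x : Fin n → ℂ,
        (∀ i, MvPolynomial.aeval x (f i) = 0) ∧ MvPolynomial.aeval x fn1 = 0) :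
    ∃ (a : ℤ) (g : MvPolynomial (Fin n) ℤ), a ≠ 0 ∧
      MvPolynomial.C a - g * fn1 ∈ Ideal.span (Set.range f) :=
  statement_1_general n f fn1 hnozero
end

section
/- There exists a constant C > 0 with the following property. Let n, d ≥ 1, h ≥ 1 and η ≥ 1 be natural numbers, and let f₁,…,fₙ ∈ ℤ[X₁,…,Xₙ] be polynomials of degree at most d, all of whose coefficients have absolute value at most 2^h, forming a regular sequence in ℚ[X₁,…,Xₙ] such that each ideal (f₁,…,f_i) of ℚ[X₁,…,Xₙ], 1 ≤ i ≤ n, is radical, and such that their common zero set V ⊂ ℂⁿ is finite of cardinality δ ≥ 1 with V ∩ ℚ(i)ⁿ = ∅. Assume the system admits a geometric solution of height at most η: there exist integers λ₁,…,λₙ, a polynomial q_u ∈ ℤ[T] of degree δ, nonzero integers ρ₁,…,ρₙ and polynomials v₁,…,vₙ ∈ ℤ[T] of degree strictly less than δ, where all the integers λ_i, ρ_i and all coefficients of q_u and of the v_i have absolute value at most 2^η, such that with U := λ₁X₁ + ⋯ + λₙXₙ the ideal (f₁,…,fₙ) of ℚ[X₁,…,Xₙ] equals (q_u(U), ρ₁X₁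 − v₁(U), …, ρₙXₙ − vₙ(U)). Let ε be a real number with 0 < ε ≤ 1, let q ≥ 1 be a natural number and p₁,…,pₙ Gaussian integers, set a := (p₁/q,…,pₙ/q) ∈ ℂⁿ, and suppose there exists α ∈ V with ‖a − α‖ < ε. Then (−log₂ ε)/(n·d·δ)^C − (h + η) ≤ log₂ q. -/
/-!
Write `U = λ₁X₁ + ⋯ + λₙXₙ`. On the zero set `V`, the geometric solution gives `q_u(U(x)) = 0`
and `ρₖxₖ = vₖ(U(x))`, so `U` is injective on `V`; as `#V = δ = deg q_u`, `U` maps `V` onto the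
roots of `q_u`, and every root `z` of `q_u` comes from the point `(vₖ(z)/ρₖ)ₖ ∈ V`. Since `V` avoids
`ℚ(i)ⁿ`, `q_u` has no root in `ℚ(i)` (in particular `δ ≥ 2`).

Now `U(a) = w/q` with `w ∈ ℤ[i]`, so `q^δ q_u(U(a))` is a nonzero Gaussian integer and
`|q_u(U(a))| ≥ q^{-δ}`. On the other hand `U(α)` is a root of `q_u`, of modulus at most `2^η + 1` by
Cauchy's bound, and `|U(a) - U(α)| ≤ n 2^η ε`; a mean value estimate then gives
`|q_u(U(a))| ≤ 2^{O(nδη)} ε`. Comparing the two bounds and taking logarithms yields the claim.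
-/

open Polynomial Finset Complex

/-- The norm on `ℂⁿ` associated with the standard hermitian inner product. -/
noncomputable def cnorm {n : ℕ} (x : Fin n → ℂ) : ℝ :=
  Real.sqrt (∑ k, ‖x k‖ ^ 2)

lemma norm_le_cnorm {n : ℕ} (x : Fin n → ℂ) (i : Fin n) : ‖x i‖ ≤ cnorm x :=
  Real.le_sqrt_of_sq_le (single_le_sum (f := fun k => ‖x k‖ ^ 2) (fun _ _ => sq_nonneg _)
    (mem_univ i))

lemma norm_sum_mul_sub_sum_mul_le {n : ℕ} {lam : Fin n → ℤ} {B : ℝ}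
    (hlam : ∀ i, |(lam i : ℝ)| ≤ B) (x y : Fin n → ℂ) :
    ‖∑ i, (lam i : ℂ) * x i - ∑ i, (lam i : ℂ) * y i‖ ≤ n * B * cnorm (x - y) := by
  rw [← sum_sub_distrib]
  calc ‖∑ i, ((lam i : ℂ) * x i - (lam i : ℂ) * y i)‖
      ≤ ∑ _i : Fin n, B * cnorm (x - y) := by
        refine (norm_sum_le _ _).trans (sum_le_sum fun i _ => ?_)
        rw [← mul_sub, norm_mul, norm_intCast]
        exact mul_le_mul (hlam i) (norm_le_cnorm (x - y) i) (norm_nonneg _)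
          ((abs_nonneg _).trans (hlam i))
    _ = n * B * cnorm (x - y) := by
        rw [sum_const, card_univ, Fintype.card_fin, nsmul_eq_mul, mul_assoc]

def gaussianRat : Subring ℂ where
  carrier := {z | ∃ u w : ℚ, z = u + w * I}
  zero_mem' := ⟨0, 0, by simp⟩
  one_mem' := ⟨1, 0, by simp⟩
  add_mem' := by
    rintro _ _ ⟨u, w, rfl⟩ ⟨u', w', rfl⟩
    exact ⟨u + u', w + w', by push_cast; ring⟩
  neg_mem' := by
    rintro _ ⟨u, w, rfl⟩
    exact ⟨-u, -w, by push_cast; ring⟩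
  mul_mem' := by
    rintro _ _ ⟨u, w, rfl⟩ ⟨u', w', rfl⟩
    exact ⟨u * u' - w * w', u * w' + w * u', by
      push_cast; linear_combination (w * w' : ℂ) * I_mul_I⟩

lemma ratCast_mem_gaussianRat (r : ℚ) : (r : ℂ) ∈ gaussianRat := ⟨r, 0, by simp⟩

lemma div_ratCast_mem_gaussianRat {z : ℂ} (hz : z ∈ gaussianRat) (r : ℚ) :
    z / r ∈ gaussianRat := by
  obtain ⟨u, w, rfl⟩ := hz
  exact ⟨u / r, w / r, by push_cast; ring⟩

lemma GaussianInt.toComplex_mem_gaussianRat (x : GaussianInt) : (x : ℂ) ∈ gaussianRat :=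
  ⟨x.re, x.im, by simp [GaussianInt.toComplex_def]⟩

lemma GaussianInt.one_le_norm_toComplex {x : GaussianInt} (hx : x ≠ 0) : 1 ≤ ‖(x : ℂ)‖ := by
  have h : (1 : ℝ) ≤ x.norm := by exact_mod_cast GaussianInt.norm_pos.mpr hx
  rw [GaussianInt.intCast_real_norm, Complex.normSq_eq_norm_sq] at h
  nlinarith [_root_.norm_nonneg (x : ℂ)]

lemma aeval_mem_subring {A : Type*} [CommRing A] (S : Subring A) (P : ℤ[X]) {z : A}
    (hz : z ∈ S) : aeval z P ∈ S := by
  rw [show z = S.subtype.toIntAlgHom ⟨z, hz⟩ from rfl, aeval_algHom_apply]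
  exact SetLike.coe_mem _

lemma exists_rat_aeval_eq_zero_of_natDegree_eq_one {K : Type*} [Field K] [CharZero K]
    {P : ℤ[X]} (hP : P.natDegree = 1) : ∃ r : ℚ, aeval (r : K) P = 0 := by
  have ha : (P.coeff 1 : K) ≠ 0 := by
    have := leadingCoeff_ne_zero.mpr (ne_zero_of_natDegree_gt (hP ▸ zero_lt_one))
    rw [leadingCoeff, hP] at this
    exact_mod_cast this
  refine ⟨-P.coeff 0 / P.coeff 1, ?_⟩
  rw [aeval_eq_sum_range, hP, sum_range_succ, sum_range_one]
  simp only [zsmul_eq_mul, pow_zero, pow_one, mul_one]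
  push_cast
  field_simp
  ring

lemma exists_gaussianInt_eq_pow_mul_aeval_div (P : ℤ[X]) (w : GaussianInt) {q : ℕ}
    (hq : q ≠ 0) :
    ∃ x : GaussianInt, (x : ℂ) = (q : ℂ) ^ P.natDegree * aeval ((w : ℂ) / q) P := by
  refine ⟨aeval w (P.scaleRoots q), ?_⟩
  have := scaleRoots_eval₂_mul (p := P) (algebraMap ℤ ℂ) ((w : ℂ) / q) q
  rw [← aeval_def, ← aeval_def] at this
  simp only [algebraMap_int_eq, eq_intCast, Int.cast_natCast] at this
  rw [mul_div_cancel₀ _ (by exact_mod_cast hq)] at this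
  rw [← this]
  exact (aeval_algHom_apply GaussianInt.toComplex.toIntAlgHom w _).symm

lemma one_le_pow_mul_norm_aeval_div (P : ℤ[X]) (w : GaussianInt) {q : ℕ} (hq : q ≠ 0)
    (h : aeval ((w : ℂ) / q) P ≠ 0) :
    1 ≤ (q : ℝ) ^ P.natDegree * ‖aeval ((w : ℂ) / q) P‖ := by
  obtain ⟨x, hx⟩ := exists_gaussianInt_eq_pow_mul_aeval_div P w hq
  have hx0 : x ≠ 0 := by
    rintro rfl
    simp [hq, h] at hx
  simpa [hx] using GaussianInt.one_le_norm_toComplex hx0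

lemma exists_gaussianInt_sum_mul_div {σ : Type*} [Fintype σ] (lam : σ → ℤ) {p : σ → ℂ}
    (hp : ∀ k, ∃ u w : ℤ, p k = u + w * I) (q : ℕ) :
    ∃ w : GaussianInt, ∑ i, (lam i : ℂ) * (p i / q) = w / q := by
  choose g g' hg using hp
  refine ⟨∑ i, lam i * ⟨g i, g' i⟩, ?_⟩
  simp only [map_sum, map_mul, map_intCast, GaussianInt.toComplex_def', sum_div, hg]
  exact sum_congr rfl fun i _ => (mul_div_assoc _ _ _).symm

section Estimates

variable {𝕜 : Type*} [NormedCommRing 𝕜] [NormOneClass 𝕜]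

lemma norm_pow_sub_pow_le {u t : 𝕜} {R : ℝ} (hu : ‖u‖ ≤ R) (ht : ‖t‖ ≤ R) (j : ℕ) :
    ‖u ^ j - t ^ j‖ ≤ j * R ^ (j - 1) * ‖u - t‖ := by
  rw [← (Commute.all u t).geom_sum₂_mul]
  refine (norm_mul_le _ _).trans (mul_le_mul_of_nonneg_right ?_ (norm_nonneg _))
  have hR : 0 ≤ R := (norm_nonneg u).trans hu
  calc ‖∑ i ∈ range j, u ^ i * t ^ (j - 1 - i)‖
      ≤ ∑ i ∈ range j, ‖u‖ ^ i * ‖t‖ ^ (j - 1 - i) := by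
        refine (norm_sum_le _ _).trans (sum_le_sum fun i _ => ?_)
        exact (norm_mul_le _ _).trans (by gcongr <;> exact norm_pow_le _ _)
    _ ≤ ∑ i ∈ range j, R ^ (j - 1) := by
        refine sum_le_sum fun i hi => ?_
        calc ‖u‖ ^ i * ‖t‖ ^ (j - 1 - i) ≤ R ^ i * R ^ (j - 1 - i) := by gcongr
          _ = R ^ (j - 1) := by rw [← pow_add]; congr 1; have := mem_range.mp hi; omega
    _ = j * R ^ (j - 1) := by simp

lemma norm_eval_sub_eval_le (P : 𝕜[X]) {u t : 𝕜} {B R : ℝ} (hB : ∀ j, ‖P.coeff j‖ ≤ B)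
    (hR : 1 ≤ R) (hu : ‖u‖ ≤ R) (ht : ‖t‖ ≤ R) :
    ‖P.eval u - P.eval t‖ ≤
      (P.natDegree + 1) * B * (P.natDegree * R ^ P.natDegree) * ‖u - t‖ := by
  have hB0 : 0 ≤ B := (norm_nonneg _).trans (hB 0)
  rw [eval_eq_sum_range, eval_eq_sum_range, ← sum_sub_distrib]
  calc ‖∑ j ∈ range (P.natDegree + 1), (P.coeff j * u ^ j - P.coeff j * t ^ j)‖
      ≤ ∑ j ∈ range (P.natDegree + 1), B * (P.natDegree * R ^ P.natDegree * ‖u - t‖) := by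
        refine (norm_sum_le _ _).trans (sum_le_sum fun j hj => ?_)
        have hj : j ≤ P.natDegree := Nat.lt_succ_iff.mp (mem_range.mp hj)
        rw [← mul_sub]
        refine (norm_mul_le _ _).trans (mul_le_mul (hB j) ?_ (norm_nonneg _) hB0)
        refine (norm_pow_sub_pow_le hu ht j).trans ?_
        gcongr
        omega
    _ = _ := by rw [sum_const, card_range, nsmul_eq_mul]; push_cast; ring

end Estimates

lemma norm_lt_add_one_of_isRoot {K : Type*} [NormedDivisionRing K] {p : K[X]} (hp : p ≠ 0)
    {B : ℝ} (hB : ∀ j, ‖p.coeff j‖ ≤ B) (hlead : 1 ≤ ‖p.leadingCoeff‖) {a : K}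
    (ha : p.IsRoot a) : ‖a‖ < B + 1 := by
  have hB0 : 0 ≤ B := (norm_nonneg _).trans (hB 0)
  have hbound : cauchyBound p ≤ B.toNNReal + 1 := by
    unfold cauchyBound
    gcongr
    refine div_le_of_le_mul₀ zero_le zero_le ?_
    refine (Finset.sup_le fun j _ => ?_).trans (le_mul_of_one_le_right zero_le ?_)
    · exact (Real.le_toNNReal_iff_coe_le hB0).mpr (hB j)
    · exact_mod_cast hlead
  have := (ha.norm_lt_cauchyBound hp).trans_le hbound
  rwa [← NNReal.coe_lt_coe, NNReal.coe_add, Real.coe_toNNReal B hB0, coe_nnnorm,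
    NNReal.coe_one] at this

lemma norm_coeff_map_intCast (P : ℤ[X]) (j : ℕ) :
    ‖(P.map (algebraMap ℤ ℂ)).coeff j‖ = |(P.coeff j : ℝ)| := by
  rw [coeff_map, algebraMap_int_eq, eq_intCast, norm_intCast]

lemma norm_lt_add_one_of_aeval_eq_zero {P : ℤ[X]} (hP : P ≠ 0) {B : ℝ}
    (hB : ∀ j, |(P.coeff j : ℝ)| ≤ B) {t : ℂ} (ht : aeval t P = 0) : ‖t‖ < B + 1 := by
  have hlead : 1 ≤ ‖(P.map (algebraMap ℤ ℂ)).leadingCoeff‖ := by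
    rw [leadingCoeff, natDegree_map_eq_of_injective (RingHom.injective_int _),
      norm_coeff_map_intCast]
    exact_mod_cast Int.one_le_abs (leadingCoeff_ne_zero.mpr hP)
  refine norm_lt_add_one_of_isRoot ((Polynomial.map_ne_zero_iff (RingHom.injective_int _)).mpr hP)
    (fun j => (norm_coeff_map_intCast P j).trans_le (hB j)) hlead ?_
  rwa [IsRoot, eval_map_algebraMap]

lemma norm_aeval_sub_aeval_le (P : ℤ[X]) {u t : ℂ} {B R : ℝ} (hB : ∀ j, |(P.coeff j : ℝ)| ≤ B)
    (hR : 1 ≤ R) (hu : ‖u‖ ≤ R) (ht : ‖t‖ ≤ R) :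
    ‖aeval u P - aeval t P‖ ≤
      (P.natDegree + 1) * B * (P.natDegree * R ^ P.natDegree) * ‖u - t‖ := by
  have := norm_eval_sub_eval_le (P.map (algebraMap ℤ ℂ))
    (fun j => (norm_coeff_map_intCast P j).trans_le (hB j)) hR hu ht
  rwa [eval_map_algebraMap, eval_map_algebraMap,
    natDegree_map_eq_of_injective (RingHom.injective_int _)] at this

-- Bounds `log₂ ((δ + 1) δ n B² R^δ)`, where `B = 2^η` and `R ≤ 2^(n+1) B`.
def liouvilleExponent (n η δ : ℕ) : ℕ := 3 * δ + n + 2 * η + n * δ + η * δ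

lemma norm_aeval_le_of_aeval_eq_zero {P : ℤ[X]} (hP : P ≠ 0) {η n : ℕ}
    (hcoeff : ∀ j, |P.coeff j| ≤ 2 ^ η) {t u : ℂ} (ht : aeval t P = 0) {ε : ℝ} (hε0 : 0 ≤ ε)
    (hε1 : ε ≤ 1) (hut : ‖u - t‖ ≤ n * 2 ^ η * ε) :
    ‖aeval u P‖ ≤ 2 ^ liouvilleExponent n η P.natDegree * ε := by
  set B : ℝ := 2 ^ η with hBdef
  set δ := P.natDegree
  have hB : ∀ j, |(P.coeff j : ℝ)| ≤ B := fun j => by rw [hBdef]; exact_mod_cast hcoeff j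
  have hB1 : 1 ≤ B := one_le_pow₀ one_le_two
  have htB : ‖t‖ ≤ B + 1 := (norm_lt_add_one_of_aeval_eq_zero hP hB ht).le
  have hnB : ‖u - t‖ ≤ n * B := hut.trans (mul_le_of_le_one_right (by positivity) hε1)
  set R : ℝ := (n + 1) * B + 1 with hRdef
  have huR : ‖u‖ ≤ R :=
    calc ‖u‖ = ‖t + (u - t)‖ := by rw [add_sub_cancel]
      _ ≤ ‖t‖ + ‖u - t‖ := norm_add_le _ _
      _ ≤ R := by linarith
  have htR : ‖t‖ ≤ R := by nlinarith [(by positivity : (0 : ℝ) ≤ n * B)]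
  have hdiff := norm_aeval_sub_aeval_le P hB (by nlinarith) huR htR
  rw [ht, sub_zero] at hdiff
  have hpow (m : ℕ) : (m : ℝ) + 1 ≤ 2 ^ m := by exact_mod_cast Nat.lt_two_pow_self
  have hR : R ≤ 2 ^ (n + 1) * B := by
    have := hpow (n + 1)
    push_cast at this
    nlinarith
  calc ‖aeval u P‖ ≤ (δ + 1) * B * (δ * R ^ δ) * (n * B * ε) := hdiff.trans (by gcongr)
    _ = (δ + 1) * δ * n * B ^ 2 * R ^ δ * ε := by ring
    _ ≤ 2 ^ δ * 2 ^ δ * 2 ^ n * B ^ 2 * (2 ^ (n + 1) * B) ^ δ * ε := by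
        gcongr
        · exact hpow δ
        · linarith [hpow δ]
        · linarith [hpow n]
    _ = 2 ^ liouvilleExponent n η δ * ε := by
        rw [liouvilleExponent, hBdef, ← pow_mul, ← pow_add, mul_pow, ← pow_mul, ← pow_mul,
          ← pow_add]
        ring

lemma neg_logb_le_of_one_le_mul {x ε : ℝ} (hx : 0 < x) (hε : 0 < ε) {δ E : ℕ}
    (h : 1 ≤ x ^ δ * 2 ^ E * ε) : -Real.logb 2 ε ≤ δ * Real.logb 2 x + E := by
  have := Real.logb_nonneg one_lt_two h
  rw [Real.logb_mul (by positivity) hε.ne', Real.logb_mul (by positivity) (by positivity),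
    Real.logb_pow, Real.logb_pow, Real.logb_self_eq_one one_lt_two] at this
  linarith

lemma liouvilleExponent_le {n d δ η : ℕ} (h : ℕ) (hn : 1 ≤ n) (hd : 1 ≤ d) (hδ : 2 ≤ δ)
    (hη : 1 ≤ η) : liouvilleExponent n η δ ≤ (n * d * δ) ^ 4 * (h + η) := by
  rw [liouvilleExponent]
  have hnδ : 2 ≤ n * δ := by nlinarith
  have h1 : 1 ≤ n * δ := by omega
  have h2 : δ ≤ n * δ := by nlinarith
  have h3 : n * δ ≤ n * δ * η := by nlinarith
  have h4 : η ≤ n * δ * η := by nlinarith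
  have h5 : η * δ ≤ n * δ * η := by nlinarith
  calc 3 * δ + n + 2 * η + n * δ + η * δ ≤ 8 * (n * δ) * η := by nlinarith
    _ ≤ (n * δ) ^ 4 * η := by
        gcongr
        calc 8 * (n * δ) = 2 ^ 3 * (n * δ) := by norm_num
          _ ≤ (n * δ) ^ 3 * (n * δ) := by gcongr
          _ = (n * δ) ^ 4 := by ring
    _ ≤ (n * d * δ) ^ 4 * (h + η) := by
        gcongr
        · nlinarith
        · omega

lemma neg_logb_div_sub_le_logb {n d δ η q : ℕ} (h : ℕ) (hn : 1 ≤ n) (hd : 1 ≤ d) (hδ : 2 ≤ δ)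
    (hη : 1 ≤ η) (hq : 1 ≤ q) {ε : ℝ} (hε : 0 < ε)
    (hqε : 1 ≤ (q : ℝ) ^ δ * (2 ^ liouvilleExponent n η δ * ε)) :
    -Real.logb 2 ε / ((n * d * δ : ℕ) : ℝ) ^ 4 - ((h : ℝ) + η) ≤ Real.logb 2 q := by
  have hlog := neg_logb_le_of_one_le_mul (x := q) (by positivity) hε (by rwa [mul_assoc])
  have hδM : (δ : ℝ) ≤ ((n * d * δ : ℕ) : ℝ) ^ 4 := by
    exact_mod_cast (Nat.le_mul_of_pos_left δ (by positivity)).trans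
      (Nat.le_self_pow (by norm_num) _)
  have hEM : (liouvilleExponent n η δ : ℝ) ≤ ((n * d * δ : ℕ) : ℝ) ^ 4 * (h + η) := by
    exact_mod_cast liouvilleExponent_le h hn hd hδ hη
  have hq0 : 0 ≤ Real.logb 2 q := Real.logb_nonneg one_lt_two (by exact_mod_cast hq)
  rw [sub_le_iff_le_add, div_le_iff₀ (by positivity)]
  nlinarith

lemma MvPolynomial.zeroLocus_span_range_map_intCast {σ ι K : Type*} [Field K] [Algebra ℚ K]
    (f : ι → MvPolynomial σ ℤ) :
    zeroLocus K (Ideal.span (Set.range fun i => map (Int.castRingHom ℚ) (f i))) =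
      {x | ∀ i, aeval x (f i) = 0} := by
  ext x
  have hmap (p : MvPolynomial σ ℤ) : aeval x (map (Int.castRingHom ℚ) p) = aeval x p := by
    rw [← algebraMap_int_eq, aeval_map_algebraMap]
  refine ⟨fun h i => hmap (f i) ▸ h _ (Ideal.subset_span ⟨i, rfl⟩), fun h p hp => ?_⟩
  refine (Ideal.span_le (I := RingHom.ker (aeval x)).mpr ?_) hp
  rintro _ ⟨i, rfl⟩
  exact (hmap (f i)).trans (h i)

noncomputable section GeometricSolution

variable {σ : Type*} [Fintype σ]

def linearForm (lam : σ → ℤ) : MvPolynomial σ ℚ :=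
  ∑ i, MvPolynomial.C (lam i : ℚ) * MvPolynomial.X i

def geometricSolutionIdeal (lam ρ : σ → ℤ) (qu : ℤ[X]) (v : σ → ℤ[X]) :
    Ideal (MvPolynomial σ ℚ) :=
  Ideal.span ({aeval (linearForm lam) (qu.map (Int.castRingHom ℚ))} ∪
    Set.range fun i => MvPolynomial.C (ρ i : ℚ) * MvPolynomial.X i -
      aeval (linearForm lam) ((v i).map (Int.castRingHom ℚ)))

lemma aeval_aeval_map_linearForm (lam : σ → ℤ) (P : ℤ[X]) (x : σ → ℂ) :
    MvPolynomial.aeval x (aeval (linearForm lam) (P.map (Int.castRingHom ℚ))) =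
      aeval (∑ i, (lam i : ℂ) * x i) P := by
  rw [← Polynomial.aeval_algHom_apply, ← algebraMap_int_eq, aeval_map_algebraMap]
  simp [linearForm]

namespace geometricSolutionIdeal

variable {lam ρ : σ → ℤ} {qu : ℤ[X]} {v : σ → ℤ[X]} {x : σ → ℂ}

lemma aeval_eq_zero_of_mem_zeroLocus
    (hx : x ∈ MvPolynomial.zeroLocus ℂ (geometricSolutionIdeal lam ρ qu v)) :
    aeval (∑ i, (lam i : ℂ) * x i) qu = 0 := by
  rw [← aeval_aeval_map_linearForm]
  exact hx _ (Ideal.subset_span (Set.mem_union_left _ rfl))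

lemma mul_eq_aeval_of_mem_zeroLocus
    (hx : x ∈ MvPolynomial.zeroLocus ℂ (geometricSolutionIdeal lam ρ qu v)) (k : σ) :
    (ρ k : ℂ) * x k = aeval (∑ i, (lam i : ℂ) * x i) (v k) := by
  have := hx _ (Ideal.subset_span (Set.mem_union_right _ ⟨k, rfl⟩))
  rwa [map_sub, aeval_aeval_map_linearForm, sub_eq_zero, map_mul,
    MvPolynomial.aeval_C, MvPolynomial.aeval_X, eq_ratCast, Rat.cast_intCast] at this

lemma injOn_zeroLocus (hρ : ∀ i, ρ i ≠ 0) :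
    Set.InjOn (fun x : σ → ℂ => ∑ i, (lam i : ℂ) * x i)
      (MvPolynomial.zeroLocus ℂ (geometricSolutionIdeal lam ρ qu v)) := by
  intro x hx y hy hxy
  funext k
  refine mul_left_cancel₀ (Int.cast_ne_zero.mpr (hρ k)) ?_
  rw [mul_eq_aeval_of_mem_zeroLocus hx, mul_eq_aeval_of_mem_zeroLocus hy]
  exact congrArg (fun s => aeval s (v k)) hxy

lemma rootSet_subset_image_zeroLocus (hρ : ∀ i, ρ i ≠ 0)
    (hfin : (MvPolynomial.zeroLocus ℂ (geometricSolutionIdeal lam ρ qu v)).Finite)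
    (hcard : (MvPolynomial.zeroLocus ℂ (geometricSolutionIdeal lam ρ qu v)).ncard =
      qu.natDegree) :
    qu.rootSet ℂ ⊆ (fun x : σ → ℂ => ∑ i, (lam i : ℂ) * x i) ''
      MvPolynomial.zeroLocus ℂ (geometricSolutionIdeal lam ρ qu v) := by
  rcases eq_or_ne qu 0 with rfl | hqu
  · simp
  have himage : (fun x : σ → ℂ => ∑ i, (lam i : ℂ) * x i) ''
      MvPolynomial.zeroLocus ℂ (geometricSolutionIdeal lam ρ qu v) ⊆ qu.rootSet ℂ := by
    rintro _ ⟨x, hx, rfl⟩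
    exact (mem_rootSet_of_ne hqu).mpr (aeval_eq_zero_of_mem_zeroLocus hx)
  refine (Set.eq_of_subset_of_ncard_le himage ?_).ge
  rw [(injOn_zeroLocus hρ).ncard_image, hcard]
  exact ncard_rootSet_le qu ℂ

lemma aeval_ne_zero_of_mem_gaussianRat (hρ : ∀ i, ρ i ≠ 0)
    (hfin : (MvPolynomial.zeroLocus ℂ (geometricSolutionIdeal lam ρ qu v)).Finite)
    (hcard : (MvPolynomial.zeroLocus ℂ (geometricSolutionIdeal lam ρ qu v)).ncard =
      qu.natDegree)
    (hrat : ∀ x ∈ MvPolynomial.zeroLocus ℂ (geometricSolutionIdeal lam ρ qu v),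
      ¬ ∀ k, x k ∈ gaussianRat) (hqu : qu ≠ 0) {z : ℂ} (hz : z ∈ gaussianRat) :
    aeval z qu ≠ 0 := by
  intro hroot
  obtain ⟨x, hx, rfl⟩ := rootSet_subset_image_zeroLocus hρ hfin hcard
    ((mem_rootSet_of_ne hqu).mpr hroot)
  refine hrat x hx fun k => ?_
  rw [← mul_div_cancel_left₀ (x k) (Int.cast_ne_zero.mpr (hρ k) : (ρ k : ℂ) ≠ 0),
    mul_eq_aeval_of_mem_zeroLocus hx, ← Rat.cast_intCast]
  exact div_ratCast_mem_gaussianRat (aeval_mem_subring _ _ hz) _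

end geometricSolutionIdeal

end GeometricSolution

/-- Multivariate Liouville estimate.
There is a universal constant `C > 0` such that for any smooth regular
sequence `f₁, …, fₙ ∈ ℤ[X₁,…,Xₙ]` of degree at most `d` and height at most
`h`, whose zero set `V ⊂ ℂⁿ` is finite of cardinality `δ ≥ 1` and avoids
`ℚ(i)ⁿ`, admitting a geometric solution of height at most `η`, and for any
rational approximation `a = (p₁/q, …, pₙ/q)` with `‖a − α‖ < ε ≤ 1` for some
`α ∈ V`, one has `(−log₂ ε)/(n·d·δ)^C − (h + η) ≤ log₂ q`. -/
theorem statement_6 :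
    ∃ C : ℕ, 0 < C ∧
      ∀ (n d h η δ : ℕ), 1 ≤ n → 1 ≤ d → 1 ≤ h → 1 ≤ η → 1 ≤ δ →
      ∀ f : Fin n → MvPolynomial (Fin n) ℤ,
      -- degrees at most `d`:
      (∀ i, (f i).totalDegree ≤ d) →
      -- heights at most `h`:
      (∀ i m, |MvPolynomial.coeff m (f i)| ≤ 2 ^ h) →
      -- `f₁, …, fₙ` is a regular sequence in `ℚ[X₁,…,Xₙ]`:
      (∀ i : Fin n, ∀ g : MvPolynomial (Fin n) ℚ,
        g * MvPolynomial.map (Int.castRingHom ℚ) (f i) ∈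
          Ideal.span ((fun j : Fin n => MvPolynomial.map (Int.castRingHom ℚ) (f j)) ''
            {j | j < i}) →
        g ∈ Ideal.span ((fun j : Fin n => MvPolynomial.map (Int.castRingHom ℚ) (f j)) ''
            {j | j < i})) →
      -- each ideal `(f₁, …, f_i)` of `ℚ[X₁,…,Xₙ]` is radical:
      (∀ i : Fin n,
        (Ideal.span ((fun j : Fin n => MvPolynomial.map (Int.castRingHom ℚ) (f j)) ''
          {j | j ≤ i})).IsRadical) →
      -- the common zero set `V` is finite of cardinality `δ`:
      {x : Fin n → ℂ | ∀ i, MvPolynomial.aeval x (f i) = 0}.Finite →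
      {x : Fin n → ℂ | ∀ i, MvPolynomial.aeval x (f i) = 0}.ncard = δ →
      -- `V ∩ ℚ(i)ⁿ = ∅`:
      (∀ x ∈ {x : Fin n → ℂ | ∀ i, MvPolynomial.aeval x (f i) = 0},
        ¬ ∀ k, ∃ u w : ℚ, x k = (u : ℂ) + (w : ℂ) * Complex.I) →
      -- geometric solution of height at most `η`:
      ∀ (lam ρ : Fin n → ℤ) (qu : Polynomial ℤ) (v : Fin n → Polynomial ℤ),
      (∀ i, ρ i ≠ 0) →
      qu.natDegree = δ →
      (∀ i, (v i).natDegree < δ) →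
      (∀ i, |lam i| ≤ 2 ^ η) →
      (∀ i, |ρ i| ≤ 2 ^ η) →
      (∀ j, |qu.coeff j| ≤ 2 ^ η) →
      (∀ i j, |(v i).coeff j| ≤ 2 ^ η) →
      Ideal.span (Set.range fun i => MvPolynomial.map (Int.castRingHom ℚ) (f i)) =
        Ideal.span
          ({Polynomial.aeval
              (∑ i, MvPolynomial.C ((lam i : ℚ)) * MvPolynomial.X i)
              (Polynomial.map (Int.castRingHom ℚ) qu)} ∪
            Set.range fun i =>
              MvPolynomial.C ((ρ i : ℚ)) * MvPolynomial.X i -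
                Polynomial.aeval
                  (∑ j, MvPolynomial.C ((lam j : ℚ)) * MvPolynomial.X j)
                  (Polynomial.map (Int.castRingHom ℚ) (v i))) →
      -- rational approximation data:
      ∀ ε : ℝ, 0 < ε → ε ≤ 1 →
      ∀ q : ℕ, 1 ≤ q →
      ∀ p : Fin n → ℂ, (∀ k, ∃ u w : ℤ, p k = (u : ℂ) + (w : ℂ) * Complex.I) →
      (∃ α ∈ {x : Fin n → ℂ | ∀ i, MvPolynomial.aeval x (f i) = 0},
        cnorm ((fun k => p k / (q : ℂ)) - α) < ε) →
      (-Real.logb 2 ε) / ((n * d * δ : ℕ) : ℝ) ^ C - ((h : ℝ) + (η : ℝ)) ≤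
        Real.logb 2 (q : ℝ) := by
  refine ⟨4, by norm_num, ?_⟩
  intro n d h η δ hn hd _ hη hδ f _ _ _ _ hfin hcard hrat lam ρ qu v hρ hqudeg _ hlam _ hqub _
    hIdeal ε hε0 hε1 q hq p hp ⟨α, hα, hαε⟩
  have hV : {x : Fin n → ℂ | ∀ i, MvPolynomial.aeval x (f i) = 0} =
      MvPolynomial.zeroLocus ℂ (geometricSolutionIdeal lam ρ qu v) :=
    (MvPolynomial.zeroLocus_span_range_map_intCast f).symm.trans (congrArg _ hIdeal)
  rw [hV] at hfin hcard hrat hα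
  have hqu : qu ≠ 0 := by rintro rfl; simp only [natDegree_zero] at hqudeg; omega
  have hnoroot {z : ℂ} (hz : z ∈ gaussianRat) : aeval z qu ≠ 0 :=
    geometricSolutionIdeal.aeval_ne_zero_of_mem_gaussianRat hρ hfin (hcard.trans hqudeg.symm)
      hrat hqu hz
  have hδ2 : 2 ≤ δ := by
    by_contra! hδ1
    obtain ⟨r, hr⟩ := exists_rat_aeval_eq_zero_of_natDegree_eq_one (K := ℂ) (P := qu) (by omega)
    exact hnoroot (ratCast_mem_gaussianRat r) hr
  obtain ⟨w, hw⟩ := exists_gaussianInt_sum_mul_div lam hp q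
  have hlower := one_le_pow_mul_norm_aeval_div qu w (by omega : q ≠ 0)
    (hnoroot (by simpa using div_ratCast_mem_gaussianRat w.toComplex_mem_gaussianRat q))
  have hupper := norm_aeval_le_of_aeval_eq_zero hqu hqub
    (geometricSolutionIdeal.aeval_eq_zero_of_mem_zeroLocus hα) hε0.le hε1
    ((norm_sum_mul_sub_sum_mul_le (B := 2 ^ η) (fun i => by exact_mod_cast hlam i) _ _).trans
      (by gcongr))
  rw [hw, hqudeg] at hupper
  rw [hqudeg] at hlower
  exact neg_logb_div_sub_le_logb h hn hd hδ2 hη hq hε0 (hlower.trans (by gcongr))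
end
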